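/- (Lemma 2, first part: exact coverage rate of the asymptotic confidence interval.) Fix an integer n ≥ 1, σ > 0, λ > 0, α ∈ (0,1) and θ > 0, set ν_0 = √λ, and let μ = N(θ, σ²/n). Then μ({x : |x − θ| < z_{α/2}·σ̃(θ)/√n} ∩ {x : |x| > ν_0}) / μ({x : |x| > ν_0}) = CR_a(θ, ν_0)/P_s(θ, ν_0); that is, the conditional coverage probability CR_1(θ) of the asymptotic-based 100(1−α)% confidence interval, given that θ is selected with tuning parameter λ, equals CR_a(θ, ν_0)/P_s(θ, ν_0). -/

import Mathlib

open MeasureTheory ProbabilityTheory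

/-- The standard normal cumulative distribution function. -/
noncomputable def Phi (x : ℝ) : ℝ := (gaussianReal 0 1 (Set.Iic x)).toReal

/-- P_s(θ,ν) = Φ(√n(θ − ν)/σ) + Φ(√n(−θ − ν)/σ). -/
noncomputable def Ps (n : ℕ) (σ θ ν : ℝ) : ℝ :=
  Phi (Real.sqrt n * (θ - ν) / σ) + Phi (Real.sqrt n * (-θ - ν) / σ)

/-- σ̃(θ) = (1 + λ/θ²)⁻¹ σ for θ ≠ 0, with the convention σ̃(0) = 0. -/
noncomputable def sigTilde (lam σ θ : ℝ) : ℝ :=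
  if θ = 0 then 0 else (1 + lam / θ ^ 2)⁻¹ * σ

open Classical in
/-- The piecewise function CR_a(θ,ν); here `za` denotes the quantile z_{α/2}. -/
noncomputable def CRa (n : ℕ) (σ lam za θ ν : ℝ) : ℝ :=
  if θ < |ν - za * sigTilde lam σ θ / Real.sqrt n| then
    (Ps n σ θ ν - 2 * Phi (-(za * sigTilde lam σ θ / σ))) *
      (if ν < za * sigTilde lam σ θ / Real.sqrt n then 1 else 0)
  else if θ ≤ ν + za * sigTilde lam σ θ / Real.sqrt n then
    Phi (za * sigTilde lam σ θ / σ) - Phi (Real.sqrt n * (ν - θ) / σ)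
  else 1 - 2 * Phi (-(za * sigTilde lam σ θ / σ))

open Classical in
/-- The piecewise function CR_b(θ,ν); here `za` denotes the quantile z_{α/2}. -/
noncomputable def CRb (n : ℕ) (σ α za θ ν : ℝ) : ℝ :=
  if θ < |ν - za * σ / Real.sqrt n| then
    (Ps n σ θ ν - α) * (if ν < za * σ / Real.sqrt n then 1 else 0)
  else if θ ≤ ν + za * σ / Real.sqrt n then
    1 - α / 2 - Phi (Real.sqrt n * (ν - θ) / σ)
  else 1 - α

/-!
Under `N(θ, s²)` with `s = σ/√n`, the selection event `{|x| > ν}` is `(-∞, -ν) ∪ (ν, ∞)` and the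
coverage event is `(θ - c, θ + c)` with `c = z_{α/2} σ̃(θ)/√n > 0` (as `Φ(-z_{α/2}) = α/2 < 1/2`).
Their intersection is `(θ - c, -ν) ∪ (max (θ - c) ν, θ + c)`; standardizing `x ↦ (x - θ)/s` turns
the probability of each nonempty piece into a difference of values of `Φ`, and the four branches
of `CR_a` are the four ways in which the two pieces can be empty or not.
-/

open Set

lemma Phi_mono : Monotone Phi := fun _ _ h =>
  ENNReal.toReal_mono (measure_ne_top _ _) (measure_mono (Iic_subset_Iic.2 h))

lemma Phi_neg (x : ℝ) : Phi (-x) = 1 - Phi x := by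
  have := nullSingletonClass_gaussianReal (μ := 0) one_ne_zero
  have hsymm : (gaussianReal 0 1).map (fun y => -y) = gaussianReal 0 1 := by
    rw [gaussianReal_map_neg, neg_zero]
  calc Phi (-x) = ((gaussianReal 0 1).map (fun y => -y) (Iic (-x))).toReal := by rw [hsymm]; rfl
    _ = (gaussianReal 0 1 (Ici x)).toReal := by
        rw [Measure.map_apply measurable_neg measurableSet_Iic]
        congr 2
        ext
        simp
    _ = (gaussianReal 0 1 (Iic x)ᶜ).toReal := by
        rw [compl_Iic, measure_congr Ioi_ae_eq_Ici]
    _ = 1 - Phi x := by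
        rw [prob_compl_eq_one_sub measurableSet_Iic,
          ENNReal.toReal_sub_of_le prob_le_one ENNReal.one_ne_top, ENNReal.toReal_one, Phi]

lemma Phi_zero : Phi 0 = 1 / 2 := by
  linarith [neg_zero (G := ℝ) ▸ Phi_neg 0]

lemma pos_of_Phi_neg_lt_half {z : ℝ} (h : Phi (-z) < 1 / 2) : 0 < z := by
  by_contra! hz
  linarith [Phi_zero ▸ Phi_mono (neg_nonneg.2 hz)]

lemma gaussianReal_eq_map_affine (m s : ℝ) :
    gaussianReal m (s ^ 2).toNNReal = (gaussianReal 0 1).map (fun z => s * z + m) := by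
  have hcomp : (fun z : ℝ => s * z + m) = (· + m) ∘ (s * ·) := rfl
  rw [hcomp, ← Measure.map_map (measurable_add_const m) (measurable_const_mul s),
    gaussianReal_map_const_mul, gaussianReal_map_add_const, mul_zero, zero_add, mul_one]
  congr
  ext
  simp [sq_nonneg]

section GaussianIntervals

variable {m s : ℝ}

lemma gaussianReal_Iic_toReal (hs : 0 < s) (x : ℝ) :
    (gaussianReal m (s ^ 2).toNNReal (Iic x)).toReal = Phi ((x - m) / s) := by
  rw [gaussianReal_eq_map_affine, Measure.map_apply (by fun_prop) measurableSet_Iic, Phi]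
  congr 3
  ext z
  simp only [mem_preimage, mem_Iic, le_div_iff₀ hs]
  constructor <;> intro <;> linarith

lemma gaussianReal_Iio_toReal (hs : 0 < s) (x : ℝ) :
    (gaussianReal m (s ^ 2).toNNReal (Iio x)).toReal = Phi ((x - m) / s) := by
  have := nullSingletonClass_gaussianReal (μ := m) (v := (s ^ 2).toNNReal) (by simp [hs.ne'])
  rw [measure_congr Iio_ae_eq_Iic, gaussianReal_Iic_toReal hs]

lemma gaussianReal_Ioi_toReal (hs : 0 < s) (x : ℝ) :
    (gaussianReal m (s ^ 2).toNNReal (Ioi x)).toReal = Phi ((m - x) / s) := by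
  rw [← compl_Iic, prob_compl_eq_one_sub measurableSet_Iic,
    ENNReal.toReal_sub_of_le prob_le_one ENNReal.one_ne_top, ENNReal.toReal_one,
    gaussianReal_Iic_toReal hs, ← Phi_neg, ← neg_div, neg_sub]

lemma gaussianReal_Ioo_toReal (hs : 0 < s) {a b : ℝ} (hab : a ≤ b) :
    (gaussianReal m (s ^ 2).toNNReal (Ioo a b)).toReal
      = Phi ((b - m) / s) - Phi ((a - m) / s) := by
  have := nullSingletonClass_gaussianReal (μ := m) (v := (s ^ 2).toNNReal) (by simp [hs.ne'])
  rw [measure_congr Ioo_ae_eq_Ioc, ← Iic_sdiff_Iic, ← measureReal_def,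
    measureReal_sdiff (Iic_subset_Iic.2 hab) measurableSet_Iic, measureReal_def, measureReal_def,
    gaussianReal_Iic_toReal hs, gaussianReal_Iic_toReal hs]

end GaussianIntervals

lemma setOf_lt_abs_eq (ν : ℝ) : {x : ℝ | ν < |x|} = Iio (-ν) ∪ Ioi ν := by
  ext x
  simp [lt_abs, lt_neg, or_comm]

lemma Ioo_inter_setOf_lt_abs {p q ν : ℝ} (hq : -ν ≤ q) :
    Ioo p q ∩ {x : ℝ | ν < |x|} = Ioo p (-ν) ∪ Ioo (max p ν) q := by
  rw [setOf_lt_abs_eq, inter_union_distrib_left, Ioo_inter_Iio, Ioo_inter_Ioi, min_eq_right hq]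

lemma measure_Ioo_inter_setOf_lt_abs_toReal {μ : Measure ℝ} [IsFiniteMeasure μ] {p q ν : ℝ}
    (hν : 0 ≤ ν) (hq : -ν ≤ q) :
    (μ (Ioo p q ∩ {x : ℝ | ν < |x|})).toReal
      = (μ (Ioo p (-ν))).toReal + (μ (Ioo (max p ν) q)).toReal := by
  have hdisj : Disjoint (Ioo p (-ν)) (Ioo (max p ν) q) :=
    disjoint_left.2 fun x hx hx' => by linarith [hx.2, hx'.1, le_max_right p ν]
  rw [Ioo_inter_setOf_lt_abs hq, measure_union hdisj measurableSet_Ioo,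
    ENNReal.toReal_add (measure_ne_top _ _) (measure_ne_top _ _)]

lemma gaussianReal_setOf_lt_abs_toReal {m s ν : ℝ} (hs : 0 < s) (hν : 0 ≤ ν) :
    (gaussianReal m (s ^ 2).toNNReal {x : ℝ | ν < |x|}).toReal
      = Phi ((m - ν) / s) + Phi ((-m - ν) / s) := by
  have hdisj : Disjoint (Iio (-ν)) (Ioi ν) :=
    (Iic_disjoint_Ioi (by linarith)).mono_left Iio_subset_Iic_self
  rw [setOf_lt_abs_eq, measure_union hdisj measurableSet_Ioi,
    ENNReal.toReal_add (measure_ne_top _ _) (measure_ne_top _ _),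
    gaussianReal_Iio_toReal hs, gaussianReal_Ioi_toReal hs, add_comm, neg_sub_left, neg_add']

lemma div_sqrt_natCast_sq (σ : ℝ) (n : ℕ) : (σ / Real.sqrt n) ^ 2 = σ ^ 2 / n := by
  rw [div_pow, Real.sq_sqrt (Nat.cast_nonneg n)]

lemma gaussianReal_selection_eq_Ps {n : ℕ} (hn : 0 < n) {σ θ ν : ℝ} (hσ : 0 < σ) (hν : 0 ≤ ν) :
    (gaussianReal θ (σ ^ 2 / n).toNNReal {x : ℝ | ν < |x|}).toReal = Ps n σ θ ν := by
  have hs : 0 < σ / Real.sqrt n := div_pos hσ (Real.sqrt_pos.2 (Nat.cast_pos.2 hn))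
  have hstd (x : ℝ) : Real.sqrt n * x / σ = x / (σ / Real.sqrt n) := by
    rw [div_div_eq_mul_div, mul_comm]
  rw [← div_sqrt_natCast_sq, gaussianReal_setOf_lt_abs_toReal hs hν, Ps, hstd, hstd]

lemma gaussianReal_coverage_inter_selection_eq_CRa {n : ℕ} (hn : 0 < n) {σ lam za θ ν : ℝ}
    (hσ : 0 < σ) (hθ : 0 < θ) (hc : 0 < za * sigTilde lam σ θ) (hν : 0 ≤ ν) :
    (gaussianReal θ (σ ^ 2 / n).toNNReal
        ({x : ℝ | |x - θ| < za * sigTilde lam σ θ / Real.sqrt n} ∩ {x : ℝ | ν < |x|})).toReal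
      = CRa n σ lam za θ ν := by
  have hsn : 0 < Real.sqrt n := Real.sqrt_pos.2 (Nat.cast_pos.2 hn)
  set s := σ / Real.sqrt n
  have hs : 0 < s := div_pos hσ hsn
  have hstd (x : ℝ) : Real.sqrt n * x / σ = x / s := by rw [div_div_eq_mul_div, mul_comm]
  unfold CRa Ps
  generalize sigTilde lam σ θ = t at hc ⊢
  set c := za * t / Real.sqrt n
  have hc' : 0 < c := div_pos hc hsn
  have hr : za * t / σ = c / s := (div_div_div_cancel_right₀ hsn.ne' _ _).symm
  have hball : {x : ℝ | |x - θ| < c} = Ioo (θ - c) (θ + c) := Real.ball_eq_Ioo θ c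
  rw [← div_sqrt_natCast_sq, hr, hstd, hstd, hstd, hball,
    measure_Ioo_inter_setOf_lt_abs_toReal hν (by linarith)]
  have hleft : Phi ((θ - ν) / s) = 1 - Phi ((ν - θ) / s) := by rw [← Phi_neg, ← neg_div, neg_sub]
  rw [hleft, neg_sub_comm, Phi_neg]
  have hempty {a b : ℝ} (h : b ≤ a) : (gaussianReal θ (s ^ 2).toNNReal (Ioo a b)).toReal = 0 := by
    rw [Ioo_eq_empty_of_le h, measure_empty, ENNReal.toReal_zero]
  split_ifs with h1 h2 h3
  · rw [abs_of_neg (by linarith)] at h1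
    rw [max_eq_right (by linarith), gaussianReal_Ioo_toReal hs (by linarith),
      gaussianReal_Ioo_toReal hs (by linarith)]
    simp only [add_sub_cancel_left, sub_sub_cancel_left, neg_div, Phi_neg]
    ring
  · rw [abs_of_nonneg (by linarith)] at h1
    rw [hempty (by linarith), max_eq_right (by linarith), hempty (by linarith)]
    ring
  · rw [not_lt, abs_le] at h1
    rw [hempty (by linarith), max_eq_right (by linarith), gaussianReal_Ioo_toReal hs (by linarith),
      add_sub_cancel_left]
    ring
  · rw [hempty (by linarith), max_eq_left (by linarith), gaussianReal_Ioo_toReal hs (by linarith)]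
    simp only [add_sub_cancel_left, sub_sub_cancel_left, neg_div, Phi_neg]
    ring

/-- Lemma 2, first part: the conditional coverage probability of the
asymptotic confidence interval, given selection (|x| > ν₀ = √λ), equals
CR_a(θ, ν₀)/P_s(θ, ν₀). -/
theorem CR1_eq_conditional_coverage (n : ℕ) (hn : 1 ≤ n) (σ lam α za θ : ℝ)
    (hσ : 0 < σ) (hlam : 0 < lam) (hα : α ∈ Set.Ioo (0:ℝ) 1)
    (hza : Phi (-za) = α / 2) (hθ : 0 < θ) :
    ((gaussianReal θ (Real.toNNReal (σ^2 / n)))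
        ({x : ℝ | |x - θ| < za * sigTilde lam σ θ / Real.sqrt n}
          ∩ {x : ℝ | Real.sqrt lam < |x|})).toReal
      / ((gaussianReal θ (Real.toNNReal (σ^2 / n)))
          {x : ℝ | Real.sqrt lam < |x|}).toReal
      = CRa n σ lam za θ (Real.sqrt lam) / Ps n σ θ (Real.sqrt lam) := by
  have hza_pos : 0 < za := pos_of_Phi_neg_lt_half (by linarith [hα.2])
  have hσt : 0 < sigTilde lam σ θ := by
    rw [sigTilde, if_neg hθ.ne']
    positivity
  rw [gaussianReal_coverage_inter_selection_eq_CRa hn hσ hθ (mul_pos hza_pos hσt)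
      (Real.sqrt_nonneg lam),
    gaussianReal_selection_eq_Ps hn hσ (Real.sqrt_nonneg lam)]
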